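/- Let n ∈ (2,3) and C_osc ≥ 1, and set g_n(s) := (s^{1−n} − 1)/(1−n) for s > 0. There exists a constant c_ent > 0, depending only on n and C_osc, such that for every ε > 0 there exists C_ε > 0 with the following property: for every L > 0, every positive integer N with h = L/N, and every N-periodic sequence u with u_i > 0 satisfying the oscillation condition u_i ≤ C_osc u_{i+1} and u_i ≤ C_osc u_{i−1} for all i, one has A_Δ^h(u, g_n(u)) ≥ c_ent · ( h Σ_i u_i^{−2} d_i² − ε h Σ_i u_i^{n−4} d_i⁴ − h² Σ_i u_i^{n−4} d_i⁴ − h² Σ_i u_i^{n−4} d_i² − C_ε ( h Σ_i u_i + 1 ) ), where A_Δ^h(u, g_n(u)) denotes A_Δ^h(u, v) with v_i = g_n(u_i). -/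

import Mathlib

open Finset

noncomputable def dq (h : ℝ) (u : ℤ → ℝ) (i : ℤ) : ℝ := (u (i + 1) - u i) / h

noncomputable def Adelta (n h : ℝ) (N : ℕ) (u v : ℤ → ℝ) : ℝ :=
  -((n - 2) / 6) * h * (∑ i ∈ Icc (1 : ℤ) (N : ℤ),
      u i ^ (n - 3) * ((dq h u (i - 1)) ^ 2 + (dq h u i) ^ 2) * v i)
  - (n - 2) / 6 * h * (∑ i ∈ Icc (1 : ℤ) (N : ℤ),
      ((u i ^ (n - 3) + u (i + 1) ^ (n - 3)) * dq h u i
        + (u (i - 1) ^ (n - 3) + u i ^ (n - 3)) * dq h u (i - 1))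
      * ((u (i + 1) - u (i - 1)) / (2 * h)) * v i)


private lemma sum_shift (N : ℕ) (hN : 0 < N) (f : ℤ → ℝ) (hf : ∀ i : ℤ, f (i + (N:ℤ)) = f i) :
    ∑ i ∈ Icc (1:ℤ) (N:ℤ), f (i - 1) = ∑ i ∈ Icc (1:ℤ) (N:ℤ), f i := by
  have hN1 : (1:ℤ) ≤ (N:ℤ) := by exact_mod_cast hN
  have hmap : (Icc (0:ℤ) ((N:ℤ)-1)).map (addRightEmbedding 1) = Icc (1:ℤ) (N:ℤ) := by
    rw [Finset.map_add_right_Icc]; norm_num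
  have h1 : ∑ i ∈ Icc (1:ℤ) (N:ℤ), f (i - 1) = ∑ j ∈ Icc (0:ℤ) ((N:ℤ)-1), f j := by
    rw [← hmap, Finset.sum_map]
    apply Finset.sum_congr rfl
    intro j _
    simp [addRightEmbedding]
  rw [h1]
  have e0 : Icc (0:ℤ) ((N:ℤ)-1) = insert 0 (Icc (1:ℤ) ((N:ℤ)-1)) := by
    ext i; simp only [Finset.mem_Icc, Finset.mem_insert]; omega
  have eN : Icc (1:ℤ) (N:ℤ) = insert (N:ℤ) (Icc (1:ℤ) ((N:ℤ)-1)) := by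
    ext i; simp only [Finset.mem_Icc, Finset.mem_insert]; omega
  rw [e0, eN, Finset.sum_insert (by simp), Finset.sum_insert (by simp)]
  have hf0 : f ((N:ℤ)) = f 0 := by have := hf 0; simpa using this
  rw [hf0]

private lemma young_star {n c1 K ε : ℝ} (hn2 : 2 < n) (hn3 : n < 3) (hc1 : 0 < c1)
    (hK : 0 < K) (hε : 0 < ε) :
    ∃ Cε : ℝ, 0 < Cε ∧ ∀ U D : ℝ, 0 < U →
      K * (U ^ (n-3) * D^2) ≤ c1/2 * (U ^ (-2:ℝ) * D^2)
        + c1/2 * ε * (U ^ (n-4) * D^4) + c1/2 * Cε * U := by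
  set s : ℝ := Real.sqrt (c1*ε) with hsdef
  have hs : 0 < s := Real.sqrt_pos.2 (by positivity)
  have hs2 : s^2 = c1*ε := Real.sq_sqrt (by positivity)
  set B : ℝ := (K/s)^2/2 with hBdef
  have hB : 0 < B := by positivity
  set δ : ℝ := c1/(2*K) with hδdef
  have hδ : 0 < δ := by positivity
  set M : ℝ := δ ^ ((n-3)/(n-1)) with hMdef
  have hM0 : 0 < M := Real.rpow_pos_of_pos hδ _
  refine ⟨2*B*M/c1 + 1, by positivity, ?_⟩
  intro U D hU
  have hn1 : (0:ℝ) < n - 1 := by linarith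
  by_cases hcase : U ^ (n-1) ≤ δ
  · -- small U: K U^{n-3} D² ≤ (c1/2) U^{-2} D²
    have e : U ^ (n-3) = U ^ (n-1) * U ^ (-2:ℝ) := by
      rw [← Real.rpow_add hU]; congr 1; ring
    have h1 : K * U ^ (n-1) ≤ c1/2 := by
      have := mul_le_mul_of_nonneg_left hcase hK.le
      have e2 : K * δ = c1/2 := by rw [hδdef]; field_simp
      linarith
    have h2 : (K * U ^ (n-1)) * (U ^ (-2:ℝ) * D^2) ≤ (c1/2) * (U ^ (-2:ℝ) * D^2) :=
      mul_le_mul_of_nonneg_right h1 (by positivity)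
    have e3 : K * (U ^ (n-3) * D^2) = (K * U ^ (n-1)) * (U ^ (-2:ℝ) * D^2) := by
      rw [e]; ring
    have p1 : 0 ≤ c1/2 * ε * (U ^ (n-4) * D^4) := by positivity
    have p2 : 0 ≤ c1/2 * (2*B*M/c1 + 1) * U := by positivity
    linarith [e3, h2]
  · push_neg at hcase
    have hUlow : δ ^ ((1:ℝ)/(n-1)) ≤ U := by
      have h0 : δ ^ ((1:ℝ)/(n-1)) ≤ (U ^ (n-1)) ^ ((1:ℝ)/(n-1)) :=
        Real.rpow_le_rpow hδ.le hcase.le (by positivity)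
      rw [← Real.rpow_mul hU.le] at h0
      rw [show (n-1)*((1:ℝ)/(n-1)) = 1 by field_simp] at h0
      rwa [Real.rpow_one] at h0
    have hMbd : U ^ (n-3) ≤ M := by
      have h0 := Real.rpow_le_rpow_of_nonpos (Real.rpow_pos_of_pos hδ ((1:ℝ)/(n-1))) hUlow
        (show n-3 ≤ 0 by linarith)
      rwa [← Real.rpow_mul hδ.le, show (1:ℝ)/(n-1)*(n-3) = (n-3)/(n-1) by ring] at h0
    -- Young: K X Y ≤ (c1 ε/2) X² + B Y², X = U^{(n-4)/2} D², Y = U^{(n-2)/2}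
    set X : ℝ := U ^ ((n-4)/2) * D^2 with hXdef
    set Y : ℝ := U ^ ((n-2)/2) with hYdef
    have hY0 : 0 < Y := Real.rpow_pos_of_pos hU _
    have htm := two_mul_le_add_sq (s*X) ((K/s)*Y)
    have ea : s*X*((K/s)*Y) = K*(X*Y) := by field_simp
    have eb : (s*X)^2 = c1*ε*X^2 := by rw [mul_pow, hs2]
    have ec : ((K/s)*Y)^2 = 2*B*Y^2 := by rw [mul_pow, hBdef]; ring
    have young : K*(X*Y) ≤ c1*ε/2*X^2 + B*Y^2 := by nlinarith [htm, ea, eb, ec]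
    have sq_rpow : ∀ t:ℝ, (U ^ t)^2 = U ^ (2*t) := fun t => by
      rw [← Real.rpow_natCast (U^t) 2, ← Real.rpow_mul hU.le]; congr 1; push_cast; ring
    have eX2 : X^2 = U ^ (n-4) * D^4 := by
      rw [hXdef, mul_pow, sq_rpow, show 2*((n-4)/2) = n-4 by ring]; ring
    have eXY : X*Y = U ^ (n-3) * D^2 := by
      rw [hXdef, hYdef]
      rw [show U ^ ((n-4)/2) * D ^ 2 * U ^ ((n-2)/2) = U ^ ((n-4)/2) * U ^ ((n-2)/2) * D^2 by ring]
      rw [← Real.rpow_add hU, show (n-4)/2 + (n-2)/2 = n-3 by ring]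
    have eY2 : Y^2 = U ^ (n-2) := by
      rw [hYdef, sq_rpow, show 2*((n-2)/2) = n-2 by ring]
    have eUn2 : U ^ (n-2) = U ^ (n-3) * U := by
      rw [← Real.rpow_add_one hU.ne']; congr 1; ring
    have hY2 : Y^2 ≤ M * U := by
      rw [eY2, eUn2]
      exact mul_le_mul_of_nonneg_right hMbd hU.le
    have hBY : B*Y^2 ≤ B*(M*U) := mul_le_mul_of_nonneg_left hY2 hB.le
    have hCε : c1/2 * (2*B*M/c1 + 1) * U = B*(M*U) + c1/2*U := by field_simp
    have p1 : 0 ≤ c1/2 * (U ^ (-2:ℝ) * D^2) := by positivity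
    have p3 : 0 ≤ c1/2*U := by positivity
    -- assemble
    have goal1 : K * (U ^ (n-3) * D^2) ≤ c1*ε/2*(U ^ (n-4) * D^4) + B*(M*U) := by
      rw [← eXY, ← eX2]; linarith [young, hBY]
    have e4 : c1/2 * ε * (U ^ (n-4) * D^4) = c1*ε/2*(U ^ (n-4) * D^4) := by ring
    linarith [goal1, hCε, p1, p3, e4]

private lemma GmonoX {p b x y : ℝ} (hp : p ≤ 0) (hp1 : 0 ≤ p + 1) (hb : 0 < b)
    (hx : 0 < x) (hxy : x ≤ y) :
    (b ^ p + x ^ p) * (x - b) ≤ (b ^ p + y ^ p) * (y - b) := by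
  have hy : 0 < y := lt_of_lt_of_le hx hxy
  have e1 : x ^ p * x = x ^ (p + 1) := (Real.rpow_add_one hx.ne' p).symm
  have e2 : y ^ p * y = y ^ (p + 1) := (Real.rpow_add_one hy.ne' p).symm
  have h1 : x ^ (p+1) ≤ y ^ (p+1) := Real.rpow_le_rpow hx.le hxy hp1
  have h2 : y ^ p ≤ x ^ p := Real.rpow_le_rpow_of_nonpos hx hxy hp
  have h3 : 0 < b ^ p := Real.rpow_pos_of_pos hb p
  nlinarith [mul_le_mul_of_nonneg_left hxy h3.le, mul_le_mul_of_nonneg_left h2 hb.le]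

private lemma cross_nonnegX {p a b c : ℝ} (hp : p ≤ 0) (hp1 : 0 ≤ p + 1)
    (ha : 0 < a) (hb : 0 < b) (hc : 0 < c) :
    0 ≤ ((b ^ p + c ^ p) * (c - b) + (a ^ p + b ^ p) * (b - a)) * (c - a) := by
  have e : (b ^ p + c ^ p) * (c - b) + (a ^ p + b ^ p) * (b - a)
      = (b ^ p + c ^ p) * (c - b) - (b ^ p + a ^ p) * (a - b) := by ring
  rcases le_total a c with hle | hle
  · have h := GmonoX hp hp1 hb ha hle
    rw [e]
    exact mul_nonneg (by linarith) (by linarith)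
  · have h := GmonoX hp hp1 hb hc hle
    rw [e]
    nlinarith [mul_nonneg (by linarith : (0:ℝ) ≤ (b ^ p + a ^ p) * (a - b) - (b ^ p + c ^ p) * (c - b)) (by linarith : (0:ℝ) ≤ a - c)]

private lemma pow_oscX {n Cosc X Y : ℝ} (hn2 : 2 < n) (hn3 : n < 3) (hC : 1 ≤ Cosc)
    (hX : 0 < X) (hY : 0 < Y) (hXY : X ≤ Cosc * Y) :
    Y ^ (n-3) ≤ Cosc * X ^ (n-3) := by
  have hC0 : 0 < Cosc := lt_of_lt_of_le one_pos hC
  have h1 : X / Cosc ≤ Y := (div_le_iff₀ hC0).2 (by linarith [hXY])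
  have h2 : Y ^ (n-3) ≤ (X / Cosc) ^ (n-3) :=
    Real.rpow_le_rpow_of_nonpos (div_pos hX hC0) h1 (by linarith)
  have h3 : (X / Cosc) ^ (n-3) = X ^ (n-3) / Cosc ^ (n-3) := Real.div_rpow hX.le hC0.le _
  have h4 : X ^ (n-3) / Cosc ^ (n-3) = X ^ (n-3) * Cosc ^ (3-n) := by
    rw [div_eq_mul_inv, ← Real.rpow_neg hC0.le, show -(n-3) = 3-n by ring]
  have h5 : Cosc ^ (3-n) ≤ Cosc ^ (1:ℝ) := Real.rpow_le_rpow_of_exponent_le hC (by linarith)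
  have h6 : Cosc ^ (1:ℝ) = Cosc := Real.rpow_one _
  have hXp : 0 < X ^ (n-3) := Real.rpow_pos_of_pos hX _
  calc Y ^ (n-3) ≤ X ^ (n-3) * Cosc ^ (3-n) := by rw [← h4, ← h3]; exact h2
    _ ≤ X ^ (n-3) * Cosc := mul_le_mul_of_nonneg_left (le_trans h5 (le_of_eq h6)) hXp.le
    _ = Cosc * X ^ (n-3) := mul_comm _ _

private lemma quad_bound {B1 B2 bt x y : ℝ} (h1 : B1 ≤ bt) (h2 : B2 ≤ bt)
    (h1p : 0 < B1) (h2p : 0 < B2) :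
    (B1*y + B2*x)*((x+y)/2) ≤ bt*(x^2+y^2) := by
  nlinarith [mul_nonneg (by linarith : (0:ℝ) ≤ bt - B1) (sq_nonneg y),
    mul_nonneg (by linarith : (0:ℝ) ≤ bt - B2) (sq_nonneg x),
    mul_nonneg (by linarith : (0:ℝ) ≤ 2*bt - (B1+B2)) (by positivity : (0:ℝ) ≤ x^2+y^2),
    mul_nonneg (by linarith : (0:ℝ) ≤ B1+B2) (sq_nonneg (x-y))]

set_option maxHeartbeats 1000000 in
private lemma site_bound {n Cosc h a b c : ℝ} (hn2 : 2 < n) (hn3 : n < 3) (hC : 1 ≤ Cosc)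
    (hh : 0 < h) (ha : 0 < a) (hb : 0 < b) (hc : 0 < c)
    (hab : a ≤ Cosc * b) (hba : b ≤ Cosc * a) (hbc : b ≤ Cosc * c) :
    (-((n-2)/6) * h) *
      (b ^ (n-3) * (((b-a)/h)^2 + ((c-b)/h)^2) * ((b ^ (1-n) - 1)/(1-n))
       + ((b ^ (n-3) + c ^ (n-3)) * ((c-b)/h) + (a ^ (n-3) + b ^ (n-3)) * ((b-a)/h))
          * ((c - a)/(2*h)) * ((b ^ (1-n) - 1)/(1-n)))
    ≥ (h*((n-2)/(6*(n-1)))) * (b ^ (-2:ℝ) * ((c-b)/h)^2)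
      - (h*((n-2)/(6*(n-1))*(Cosc+2))) * (b ^ (n-3) * ((c-b)/h)^2)
      - (h*((n-2)/(6*(n-1))*((Cosc+2)*Cosc))) * (a ^ (n-3) * ((b-a)/h)^2) := by
  have hn1 : (0:ℝ) < n - 1 := by linarith
  have hp : n - 3 ≤ 0 := by linarith
  have hp1 : (0:ℝ) ≤ (n-3) + 1 := by linarith
  have hne : h ≠ 0 := hh.ne'
  set x : ℝ := (b-a)/h with hxdef
  set y : ℝ := (c-b)/h with hydef
  have hx : h*x = b - a := by rw [hxdef]; field_simp
  have hy : h*y = c - b := by rw [hydef]; field_simp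
  clear_value x y
  have ecb : (c - a)/(2*h) = (x+y)/2 := by
    have e1 : c - a = h*(x+y) := by
      have := hx; have := hy; nlinarith [hx, hy]
    rw [e1]; field_simp
  rw [ecb]
  have hbp : 0 < b ^ (n-3) := Real.rpow_pos_of_pos hb _
  have hbq : 0 < b ^ (1-n) := Real.rpow_pos_of_pos hb _
  have hapos : 0 < a ^ (n-3) := Real.rpow_pos_of_pos ha _
  have hcpos : 0 < c ^ (n-3) := Real.rpow_pos_of_pos hc _
  set S : ℝ := ((b ^ (n-3) + c ^ (n-3)) * y + (a ^ (n-3) + b ^ (n-3)) * x) * ((x+y)/2)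
    with hSdef
  set T : ℝ := b ^ (n-3) * (x^2 + y^2) + S with hTdef
  clear_value S T
  -- S ≥ 0
  have hS : 0 ≤ S := by
    have hcross := cross_nonnegX (p := n-3) hp hp1 ha hb hc
    have e : S = (((b ^ (n-3) + c ^ (n-3)) * ((h*y)) + (a ^ (n-3) + b ^ (n-3)) * ((h*x)))
        * ((h*x) + (h*y))) / (2*h^2) := by
      rw [hSdef]; field_simp
    rw [e, hx, hy, show b - a + (c - b) = c - a by ring]
    exact div_nonneg hcross (by positivity)
  -- rewrite LHS
  have hbpq : b ^ (n-3) * b ^ (1-n) = b ^ (-2:ℝ) := by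
    rw [← Real.rpow_add hb]; congr 1; ring
  have h1n : (1:ℝ) - n ≠ 0 := by intro hcon; linarith
  have veq : -((n-2)/6) * h *
      (b ^ (n-3) * (x^2 + y^2) * ((b ^ (1-n) - 1)/(1-n))
       + S * ((b ^ (1-n) - 1)/(1-n)))
      = (h*((n-2)/(6*(n-1)))) * (T * b ^ (1-n) - T) := by
    rw [hTdef]
    field_simp
    ring
  rw [veq]
  -- lower bound for T * b^{1-n}
  have hTlow : b ^ (n-3) * (x^2 + y^2) ≤ T := by rw [hTdef]; linarith
  have bound1 : b ^ (-2:ℝ) * (x^2 + y^2) ≤ T * b ^ (1-n) := by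
    calc b ^ (-2:ℝ) * (x^2 + y^2) = (b ^ (n-3) * (x^2+y^2)) * b ^ (1-n) := by
          rw [← hbpq]; ring
      _ ≤ T * b ^ (1-n) := mul_le_mul_of_nonneg_right hTlow hbq.le
  -- upper bound for T
  have hcp : c ^ (n-3) ≤ Cosc * b ^ (n-3) := pow_oscX hn2 hn3 hC hb hc hbc
  have hap : a ^ (n-3) ≤ Cosc * b ^ (n-3) := pow_oscX hn2 hn3 hC hb ha hba
  have hbpa : b ^ (n-3) ≤ Cosc * a ^ (n-3) := pow_oscX hn2 hn3 hC ha hb hab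
  have bound2 : T ≤ (Cosc+2) * (b ^ (n-3) * (x^2 + y^2)) := by
    have hSup : S ≤ (Cosc+1) * b ^ (n-3) * (x^2 + y^2) := by
      rw [hSdef]
      exact quad_bound (by linarith) (by linarith) (add_pos hbp hcpos) (add_pos hapos hbp)
    rw [hTdef]
    nlinarith [hSup, hbp.le, sq_nonneg x, sq_nonneg y]
  have bound3 : b ^ (n-3) * x^2 ≤ Cosc * (a ^ (n-3) * x^2) := by
    have h0 := mul_le_mul_of_nonneg_right hbpa (sq_nonneg x)
    linarith [h0]
  -- final assembly
  have hcoef : (0:ℝ) ≤ h*((n-2)/(6*(n-1))) := mul_nonneg hh.le (le_of_lt (div_pos (by linarith) (by linarith)))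
  have small_le_big : b ^ (-2:ℝ) * y^2 - (Cosc+2) * (b ^ (n-3) * y^2)
      - (Cosc+2)*Cosc * (a ^ (n-3) * x^2) ≤ T * b ^ (1-n) - T := by
    have hb2x : 0 ≤ b ^ (-2:ℝ) * x^2 := mul_nonneg (Real.rpow_nonneg hb.le _) (sq_nonneg x)
    have hC2 : (0:ℝ) ≤ Cosc + 2 := by linarith
    have b3 : (Cosc+2) * (b ^ (n-3) * x^2) ≤ (Cosc+2) * (Cosc * (a ^ (n-3) * x^2)) :=
      mul_le_mul_of_nonneg_left bound3 hC2
    linarith [bound1, bound2, b3, hb2x]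
  calc (h*((n-2)/(6*(n-1)))) * (b ^ (-2:ℝ) * y^2)
      - (h*((n-2)/(6*(n-1))*(Cosc+2))) * (b ^ (n-3) * y^2)
      - (h*((n-2)/(6*(n-1))*((Cosc+2)*Cosc))) * (a ^ (n-3) * x^2)
      = (h*((n-2)/(6*(n-1)))) * (b ^ (-2:ℝ) * y^2 - (Cosc+2) * (b ^ (n-3) * y^2)
          - (Cosc+2)*Cosc * (a ^ (n-3) * x^2)) := by ring
    _ ≤ (h*((n-2)/(6*(n-1)))) * (T * b ^ (1-n) - T) :=
        mul_le_mul_of_nonneg_left small_le_big hcoef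

/-- lower bound for `A_Δ^h(u, g_n(u))` with `g_n(s) = (s^{1-n} - 1)/(1-n)`. -/
theorem statement9 (n Cosc : ℝ) (hn : n ∈ Set.Ioo (2 : ℝ) 3) (hCosc : 1 ≤ Cosc) :
    ∃ cent : ℝ, 0 < cent ∧
      ∀ ε : ℝ, 0 < ε → ∃ Cε : ℝ, 0 < Cε ∧
        ∀ (L : ℝ) (hL : 0 < L) (N : ℕ) (hN : 0 < N) (h : ℝ) (hh : h = L / N)
          (u : ℤ → ℝ) (hper : ∀ i : ℤ, u (i + (N : ℤ)) = u i) (hpos : ∀ i : ℤ, 0 < u i)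
          (hosc : ∀ i : ℤ, u i ≤ Cosc * u (i + 1) ∧ u i ≤ Cosc * u (i - 1)),
          Adelta n h N u (fun i => (u i ^ (1 - n) - 1) / (1 - n)) ≥
            cent * (h * (∑ i ∈ Icc (1 : ℤ) (N : ℤ), u i ^ (-2 : ℝ) * (dq h u i) ^ 2)
              - ε * h * (∑ i ∈ Icc (1 : ℤ) (N : ℤ), u i ^ (n - 4) * (dq h u i) ^ 4)
              - h ^ 2 * (∑ i ∈ Icc (1 : ℤ) (N : ℤ), u i ^ (n - 4) * (dq h u i) ^ 4)
              - h ^ 2 * (∑ i ∈ Icc (1 : ℤ) (N : ℤ), u i ^ (n - 4) * (dq h u i) ^ 2)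
              - Cε * (h * (∑ i ∈ Icc (1 : ℤ) (N : ℤ), u i) + 1)) := by
  obtain ⟨hn2, hn3⟩ := hn
  have hn1 : (0:ℝ) < n - 1 := by linarith
  have hC0 : (0:ℝ) < Cosc := lt_of_lt_of_le one_pos hCosc
  have hc1 : (0:ℝ) < (n-2)/(6*(n-1)) := div_pos (by linarith) (by linarith)
  have hK4 : (0:ℝ) < (n-2)/(6*(n-1))*(Cosc+2) + (n-2)/(6*(n-1))*((Cosc+2)*Cosc) := by
    have h1 := mul_pos hc1 (show (0:ℝ) < Cosc+2 by linarith)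
    have h2 := mul_pos hc1 (mul_pos (show (0:ℝ) < Cosc+2 by linarith) hC0)
    linarith
  refine ⟨(n-2)/(6*(n-1))/2, by positivity, ?_⟩
  intro ε hε
  obtain ⟨Cε, hCε, hstar⟩ := young_star (n := n) hn2 hn3 hc1 hK4 hε
  refine ⟨Cε, hCε, ?_⟩
  intro L hL N hN h hh u hper hpos hosc
  have hNR : (0:ℝ) < (N:ℝ) := by exact_mod_cast hN
  have hh0 : 0 < h := by rw [hh]; exact div_pos hL hNR
  set v : ℤ → ℝ := fun i => (u i ^ (1 - n) - 1) / (1 - n) with hv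
  -- step 1 : write Adelta as a single sum
  have step2 : Adelta n h N u v = ∑ i ∈ Icc (1:ℤ) (N:ℤ),
      -((n-2)/6) * h * (u i ^ (n - 3) * ((dq h u (i - 1)) ^ 2 + (dq h u i) ^ 2) * v i
        + ((u i ^ (n - 3) + u (i + 1) ^ (n - 3)) * dq h u i
            + (u (i - 1) ^ (n - 3) + u i ^ (n - 3)) * dq h u (i - 1))
          * ((u (i + 1) - u (i - 1)) / (2 * h)) * v i) := by
    have e : ∑ i ∈ Icc (1:ℤ) (N:ℤ),
        -((n-2)/6) * h * (u i ^ (n - 3) * ((dq h u (i - 1)) ^ 2 + (dq h u i) ^ 2) * v i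
        + ((u i ^ (n - 3) + u (i + 1) ^ (n - 3)) * dq h u i
            + (u (i - 1) ^ (n - 3) + u i ^ (n - 3)) * dq h u (i - 1))
          * ((u (i + 1) - u (i - 1)) / (2 * h)) * v i)
        = -((n-2)/6) * h * ((∑ i ∈ Icc (1:ℤ) (N:ℤ),
            u i ^ (n - 3) * ((dq h u (i - 1)) ^ 2 + (dq h u i) ^ 2) * v i)
          + ∑ i ∈ Icc (1:ℤ) (N:ℤ),
            ((u i ^ (n - 3) + u (i + 1) ^ (n - 3)) * dq h u i
            + (u (i - 1) ^ (n - 3) + u i ^ (n - 3)) * dq h u (i - 1))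
          * ((u (i + 1) - u (i - 1)) / (2 * h)) * v i) := by
      rw [← Finset.mul_sum, Finset.sum_add_distrib]
    rw [e]
    show Adelta n h N u v = _
    rw [Adelta.eq_def]
    ring
  -- step 2 : per-site lower bound
  have step3 : ∑ i ∈ Icc (1:ℤ) (N:ℤ),
      ((h*((n-2)/(6*(n-1)))) * (u i ^ (-2:ℝ) * (dq h u i)^2)
        - (h*((n-2)/(6*(n-1))*(Cosc+2))) * (u i ^ (n-3) * (dq h u i)^2)
        - (h*((n-2)/(6*(n-1))*((Cosc+2)*Cosc))) * (u (i-1) ^ (n-3) * (dq h u (i-1))^2))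
      ≤ ∑ i ∈ Icc (1:ℤ) (N:ℤ),
      -((n-2)/6) * h * (u i ^ (n - 3) * ((dq h u (i - 1)) ^ 2 + (dq h u i) ^ 2) * v i
        + ((u i ^ (n - 3) + u (i + 1) ^ (n - 3)) * dq h u i
            + (u (i - 1) ^ (n - 3) + u i ^ (n - 3)) * dq h u (i - 1))
          * ((u (i + 1) - u (i - 1)) / (2 * h)) * v i) := by
    apply Finset.sum_le_sum
    intro i _
    have hosc1 := (hosc i).1
    have hosc2 := (hosc i).2
    have hosc3 : u (i-1) ≤ Cosc * u i := by
      have h0 := (hosc (i-1)).1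
      rwa [show i - 1 + 1 = i by ring] at h0
    have hsb := site_bound hn2 hn3 hCosc hh0 (hpos (i-1)) (hpos i) (hpos (i+1))
      hosc3 hosc2 hosc1
    simp only [hv, dq, show i - 1 + 1 = i from by ring]
    exact hsb
  -- step 3 : index shift for the a-term
  have hshift : ∑ i ∈ Icc (1:ℤ) (N:ℤ), u (i-1) ^ (n-3) * (dq h u (i-1))^2
      = ∑ i ∈ Icc (1:ℤ) (N:ℤ), u i ^ (n-3) * (dq h u i)^2 := by
    have hfper : ∀ j : ℤ, u (j + (N:ℤ)) ^ (n-3) * (dq h u (j + (N:ℤ)))^2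
        = u j ^ (n-3) * (dq h u j)^2 := by
      intro j
      have e1 : u (j + (N:ℤ)) = u j := hper j
      have e2 : u (j + (N:ℤ) + 1) = u (j+1) := by
        rw [show j + (N:ℤ) + 1 = (j+1) + (N:ℤ) by ring]; exact hper (j+1)
      simp only [dq, e1, e2]
    simpa using sum_shift N hN (fun j => u j ^ (n-3) * (dq h u j)^2) hfper
  -- abbreviate the five sums
  set SF : ℝ := ∑ i ∈ Icc (1:ℤ) (N:ℤ), u i ^ (-2:ℝ) * (dq h u i)^2 with hSF
  set Sg : ℝ := ∑ i ∈ Icc (1:ℤ) (N:ℤ), u i ^ (n-3) * (dq h u i)^2 with hSg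
  set SP : ℝ := ∑ i ∈ Icc (1:ℤ) (N:ℤ), u i ^ (n-4) * (dq h u i)^4 with hSP
  set SQ : ℝ := ∑ i ∈ Icc (1:ℤ) (N:ℤ), u i ^ (n-4) * (dq h u i)^2 with hSQ
  set SU : ℝ := ∑ i ∈ Icc (1:ℤ) (N:ℤ), u i with hSU
  -- distribute the lower bound sum
  have step4 : Adelta n h N u v ≥ (h*((n-2)/(6*(n-1)))) * SF
      - (h*((n-2)/(6*(n-1))*(Cosc+2))) * Sg
      - (h*((n-2)/(6*(n-1))*((Cosc+2)*Cosc))) * Sg := by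
    have e : ∑ i ∈ Icc (1:ℤ) (N:ℤ),
        ((h*((n-2)/(6*(n-1)))) * (u i ^ (-2:ℝ) * (dq h u i)^2)
        - (h*((n-2)/(6*(n-1))*(Cosc+2))) * (u i ^ (n-3) * (dq h u i)^2)
        - (h*((n-2)/(6*(n-1))*((Cosc+2)*Cosc))) * (u (i-1) ^ (n-3) * (dq h u (i-1))^2))
        = (h*((n-2)/(6*(n-1)))) * SF
          - (h*((n-2)/(6*(n-1))*(Cosc+2))) * Sg
          - (h*((n-2)/(6*(n-1))*((Cosc+2)*Cosc))) * Sg := by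
      rw [Finset.sum_sub_distrib, Finset.sum_sub_distrib, ← Finset.mul_sum, ← Finset.mul_sum,
        ← Finset.mul_sum, hshift, hSF, hSg]
    rw [step2, ge_iff_le, ← e]
    exact step3
  -- step 4 : Young + threshold absorption, summed
  have hstar' : ((n-2)/(6*(n-1))*(Cosc+2) + (n-2)/(6*(n-1))*((Cosc+2)*Cosc)) * Sg
      ≤ (n-2)/(6*(n-1))/2 * SF + (n-2)/(6*(n-1))/2 * ε * SP + (n-2)/(6*(n-1))/2 * Cε * SU := by
    have e1 : ((n-2)/(6*(n-1))*(Cosc+2) + (n-2)/(6*(n-1))*((Cosc+2)*Cosc)) * Sg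
        = ∑ i ∈ Icc (1:ℤ) (N:ℤ),
          ((n-2)/(6*(n-1))*(Cosc+2) + (n-2)/(6*(n-1))*((Cosc+2)*Cosc))
            * (u i ^ (n-3) * (dq h u i)^2) := by
      rw [hSg, Finset.mul_sum]
    have e2 : (n-2)/(6*(n-1))/2 * SF + (n-2)/(6*(n-1))/2 * ε * SP
          + (n-2)/(6*(n-1))/2 * Cε * SU
        = ∑ i ∈ Icc (1:ℤ) (N:ℤ),
          ((n-2)/(6*(n-1))/2 * (u i ^ (-2:ℝ) * (dq h u i)^2)
            + (n-2)/(6*(n-1))/2 * ε * (u i ^ (n-4) * (dq h u i)^4)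
            + (n-2)/(6*(n-1))/2 * Cε * u i) := by
      rw [hSF, hSP, hSU, Finset.mul_sum, Finset.mul_sum, Finset.mul_sum,
        ← Finset.sum_add_distrib, ← Finset.sum_add_distrib]
    rw [e1, e2]
    exact Finset.sum_le_sum (fun i _ => hstar (u i) (dq h u i) (hpos i))
  have hmul := mul_le_mul_of_nonneg_left hstar' hh0.le
  have hSPpos : 0 ≤ SP := by
    rw [hSP]
    exact Finset.sum_nonneg (fun i _ =>
      mul_nonneg (Real.rpow_nonneg (hpos i).le _) (by positivity))
  have hSQpos : 0 ≤ SQ := by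
    rw [hSQ]
    exact Finset.sum_nonneg (fun i _ =>
      mul_nonneg (Real.rpow_nonneg (hpos i).le _) (by positivity))
  have p1 : (0:ℝ) ≤ (n-2)/(6*(n-1)) * (h^2*SP) :=
    mul_nonneg hc1.le (mul_nonneg (sq_nonneg h) hSPpos)
  have p2 : (0:ℝ) ≤ (n-2)/(6*(n-1)) * (h^2*SQ) :=
    mul_nonneg hc1.le (mul_nonneg (sq_nonneg h) hSQpos)
  have p3 : (0:ℝ) ≤ (n-2)/(6*(n-1)) * Cε := mul_nonneg hc1.le hCε.le
  linarith [step4, hmul, p1, p2, p3]
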